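/- Let V ⊆ ℂ^{n+2} be the complexification of a B-nondegenerate real subspace (so V̄ = V), α ∈ ℂ×, and L a null line with L and ρ_V L complementary. Then L̄ and ρ_V L̄ are also complementary, and for every λ for which both sides are defined, p^V_{α,L}(λ*) = C ∘ p^V_{α*,L̄}(λ) ∘ C, where C denotes the complex conjugation of ℂ^{n+2} and λ* := 1/λ̄, α* := 1/ᾱ. -/

import Mathlib

noncomputable section

open Module

/-- The complexification `ℂ^{n+2}` of `ℝ^{n+1,1}`. -/
abbrev Cn (n : ℕ) := Fin (n + 2) → ℂ

/-- The complex-bilinear extension `B` of the signature `(n+1,1)` inner product on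
`ℝ^{n+1,1}`. -/
def Bf (n : ℕ) (v w : Cn n) : ℂ :=
  ∑ i : Fin (n + 2), (if (i : ℕ) < n + 1 then 1 else -1) * v i * w i

lemma Bf_add_left {n : ℕ} (v v' w : Cn n) :
    Bf n (v + v') w = Bf n v w + Bf n v' w := by
  simp only [Bf, Pi.add_apply, ← Finset.sum_add_distrib]
  exact Finset.sum_congr rfl fun i _ => by ring

lemma Bf_smul_left {n : ℕ} (c : ℂ) (v w : Cn n) :
    Bf n (c • v) w = c * Bf n v w := by
  simp only [Bf, Pi.smul_apply, smul_eq_mul, Finset.mul_sum]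
  exact Finset.sum_congr rfl fun i _ => by ring

lemma Bf_zero_left {n : ℕ} (w : Cn n) : Bf n 0 w = 0 := by
  simp [Bf]

/-- Complex conjugation on `ℂ^{n+2}`, as a `conj`-semilinear automorphism;
its fixed point set is `ℝ^{n+1,1}`. -/
def conjSL (n : ℕ) : Cn n →ₛₗ[starRingEnd ℂ] Cn n where
  toFun v := fun i => starRingEnd ℂ (v i)
  map_add' a b := by funext i; simp
  map_smul' c v := by funext i; simp

instance : RingHomSurjective (starRingEnd ℂ) :=
  ⟨fun x => ⟨starRingEnd ℂ x, by simp⟩⟩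

/-- The conjugate `Ū` of a complex subspace `U` of `ℂ^{n+2}`. -/
def conjSub {n : ℕ} (U : Submodule ℂ (Cn n)) : Submodule ℂ (Cn n) :=
  U.map (conjSL n)

/-- The real points `ℝ^{n+1,1}` inside `ℂ^{n+2}`, as a real subspace. -/
def realSub (n : ℕ) : Submodule ℝ (Cn n) where
  carrier := {v | ∀ i, starRingEnd ℂ (v i) = v i}
  add_mem' := by
    intro a b ha hb i
    simp only [Pi.add_apply, map_add, ha i, hb i]
  zero_mem' := by intro i; simp
  smul_mem' := by
    intro c v hv i
    simp only [Pi.smul_apply, Complex.real_smul, map_mul, Complex.conj_ofReal, hv i]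

/-- The real points `W ∩ ℝ^{n+1,1}` of a complex subspace `W ⊆ ℂ^{n+2}`. -/
def realPoints {n : ℕ} (W : Submodule ℂ (Cn n)) : Submodule ℝ (Cn n) :=
  (W.restrictScalars ℝ) ⊓ realSub n

/-- The Gram matrix `diag(1,1,1,-1)`. -/
def gram31 (i j : Fin 4) : ℂ :=
  if i = j then (if (i : ℕ) < 3 then 1 else -1) else 0

/-- A real subspace `P` of `ℂ^{n+2}` has signature `(3,1)` if it admits a
basis whose Gram matrix with respect to `B` is `diag(1,1,1,-1)`. -/
def hasSig31 (n : ℕ) (P : Submodule ℝ (Cn n)) : Prop :=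
  ∃ b : Fin 4 → Cn n, (∀ i, b i ∈ P) ∧
    Submodule.span ℝ (Set.range b) = P ∧
    ∀ i j, Bf n (b i) (b j) = gram31 i j

/-- The orthogonal complement of a subspace with respect to `B`. -/
def perp (n : ℕ) (V : Submodule ℂ (Cn n)) : Submodule ℂ (Cn n) where
  carrier := {v | ∀ w ∈ V, Bf n v w = 0}
  add_mem' := by
    intro a b ha hb w hw
    rw [Bf_add_left, ha w hw, hb w hw, add_zero]
  zero_mem' := by
    intro w hw
    exact Bf_zero_left w
  smul_mem' := by
    intro c v hv w hw
    rw [Bf_smul_left, hv w hw, mul_zero]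

/-- `ρ` is the reflection across `V`: the identity on `V` and minus the identity
on `V^⊥`. -/
def IsReflection (n : ℕ) (V : Submodule ℂ (Cn n)) (ρ : Cn n →ₗ[ℂ] Cn n) : Prop :=
  (∀ v ∈ V, ρ v = v) ∧ (∀ v ∈ perp n V, ρ v = -v)

/-- The automorphism `Γ^{ℓ⁺}_{ℓ⁻}(λ)`, where `ℓ⁺, ℓ⁻` are the complementary null
lines spanned by `u` and `w`: it is multiplication by `λ` on `ℓ⁺`, by `λ⁻¹` on
`ℓ⁻` and the identity on `(ℓ⁺ ⊕ ℓ⁻)^⊥`. -/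
def GammaL (n : ℕ) (u w : Cn n) (lam : ℂ) : Cn n →ₗ[ℂ] Cn n where
  toFun v := v + ((lam - 1) * (Bf n v w / Bf n u w)) • u
      + ((lam⁻¹ - 1) * (Bf n v u / Bf n u w)) • w
  map_add' a b := by
    simp only [Bf_add_left]
    module
  map_smul' c v := by
    simp only [Bf_smul_left, RingHom.id_apply]
    module

/-- `λ ↦ λ* = 1/λ̄`. -/
def cstar (z : ℂ) : ℂ := (starRingEnd ℂ z)⁻¹

/-- The linear fractional transformation appearing in the simple factor
`p^V_{α,L}`. -/
def psi (α lam : ℂ) : ℂ := (1 + α) * (lam - α) / ((1 - α) * (lam + α))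

/-- The simple factor `p^V_{α,L}(λ) = Γ^L_{ρ_V L}((1+α)(λ-α)/((1-α)(λ+α)))`,
where `ρ` is the reflection across `V` and `ℓ` spans the null line `L`. -/
def pSF (n : ℕ) (ρ : Cn n →ₗ[ℂ] Cn n) (ℓ : Cn n) (α lam : ℂ) : Cn n →ₗ[ℂ] Cn n :=
  GammaL n ℓ (ρ ℓ) (psi α lam)

/-- The value `p^V_{α,L}(∞) = Γ^L_{ρ_V L}((1+α)/(1-α))`. -/
def pSFinf (n : ℕ) (ρ : Cn n →ₗ[ℂ] Cn n) (ℓ : Cn n) (α : ℂ) : Cn n →ₗ[ℂ] Cn n :=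
  GammaL n ℓ (ρ ℓ) ((1 + α) / (1 - α))

/-!
Conjugation `C` maps `V = V̄` to itself and, since `B(C v, C w) = conj B(v, w)`, also `V^⊥`;
as `ℂ^{n+2} = V ⊕ V^⊥` by nondegeneracy, `ρ_V` commutes with `C`. Conjugating
`Γ^{u}_{w}(c)` by `C` gives `Γ^{ū}_{w̄}(c̄)`, so everything reduces to the scalar identity
`ψ_α(λ*) = conj ψ_{α*}(λ)`, i.e. `ψ_a(1/m) = ψ_{1/a}(m)`.
-/

lemma psi_inv_right (a : ℂ) {m : ℂ} (hm : m ≠ 0) : psi a m⁻¹ = psi a⁻¹ m := by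
  rcases eq_or_ne a 0 with rfl | ha
  · simp [psi, hm]
  unfold psi
  field_simp
  rw [← neg_div_neg_eq]
  congr 1 <;> ring

lemma psi_conj (a z : ℂ) :
    starRingEnd ℂ (psi a z) = psi (starRingEnd ℂ a) (starRingEnd ℂ z) := by
  simp only [psi, map_div₀, map_mul, map_add, map_sub, map_one]

lemma psi_cstar (α : ℂ) {lam : ℂ} (hlam : lam ≠ 0) :
    psi α (cstar lam) = starRingEnd ℂ (psi (cstar α) lam) := by
  rw [psi_conj, cstar, cstar, map_inv₀, Complex.conj_conj,
    psi_inv_right α ((map_ne_zero _).mpr hlam)]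

section Bilinear

variable {n : ℕ}

lemma Bf_comm (v w : Cn n) : Bf n v w = Bf n w v :=
  Finset.sum_congr rfl fun _ _ => by ring

lemma Bf_add_right (v w w' : Cn n) : Bf n v (w + w') = Bf n v w + Bf n v w' := by
  rw [Bf_comm, Bf_add_left, Bf_comm w, Bf_comm w']

lemma Bf_smul_right (c : ℂ) (v w : Cn n) : Bf n v (c • w) = c * Bf n v w := by
  rw [Bf_comm, Bf_smul_left, Bf_comm w]

variable (n) in
def bilinForm : LinearMap.BilinForm ℂ (Cn n) :=
  LinearMap.mk₂ ℂ (Bf n) Bf_add_left Bf_smul_left Bf_add_right Bf_smul_right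

lemma perp_eq_orthogonal (V : Submodule ℂ (Cn n)) : perp n V = (bilinForm n).orthogonal V := by
  ext v
  exact forall₂_congr fun w _ => by rw [Bf_comm]; rfl

lemma isCompl_perp {V : Submodule ℂ (Cn n)}
    (hVnd : ∀ v ∈ V, (∀ w ∈ V, Bf n v w = 0) → v = 0) : IsCompl V (perp n V) := by
  have hrefl : (bilinForm n).IsRefl := fun v w h => by
    simpa [bilinForm, Bf_comm v w] using h
  rw [perp_eq_orthogonal, LinearMap.BilinForm.isCompl_orthogonal_iff_disjoint hrefl,
    Submodule.disjoint_def]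
  intro v hv hvperp
  exact hVnd v hv fun w hw => by
    simpa [bilinForm, Bf_comm v w] using hvperp w hw

end Bilinear

lemma IsReflection.apply_map_of_isCompl {n : ℕ} {V : Submodule ℂ (Cn n)}
    {ρ : Cn n →ₗ[ℂ] Cn n} (hρ : IsReflection n V ρ) (hV : IsCompl V (perp n V))
    {σ : ℂ →+* ℂ} (f : Cn n →ₛₗ[σ] Cn n) (hfV : ∀ x ∈ V, f x ∈ V)
    (hfperp : ∀ x ∈ perp n V, f x ∈ perp n V) (x : Cn n) : ρ (f x) = f (ρ x) := by
  have hx : x ∈ V ⊔ perp n V := hV.sup_eq_top ▸ Submodule.mem_top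
  obtain ⟨a, ha, b, hb, rfl⟩ := Submodule.mem_sup.mp hx
  rw [map_add, map_add, map_add, hρ.1 _ (hfV a ha), hρ.2 _ (hfperp b hb), hρ.1 a ha,
    hρ.2 b hb, map_add, map_neg]

section Conjugation

variable {n : ℕ}

@[simp]
lemma conjSL_apply (v : Cn n) (i : Fin (n + 2)) : conjSL n v i = starRingEnd ℂ (v i) := rfl

@[simp]
lemma conjSL_conjSL (v : Cn n) : conjSL n (conjSL n v) = v := by
  funext i; simp

lemma Bf_conjSL (v w : Cn n) : Bf n (conjSL n v) (conjSL n w) = starRingEnd ℂ (Bf n v w) := by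
  simp only [Bf, map_sum, map_mul, conjSL_apply]
  refine Finset.sum_congr rfl fun i _ => ?_
  split_ifs <;> simp

lemma conjSL_mem {V : Submodule ℂ (Cn n)} (hV : conjSub V = V) {x : Cn n} (hx : x ∈ V) :
    conjSL n x ∈ V :=
  hV ▸ Submodule.mem_map_of_mem hx

lemma conjSL_mem_perp {V : Submodule ℂ (Cn n)} (hV : conjSub V = V) {x : Cn n}
    (hx : x ∈ perp n V) : conjSL n x ∈ perp n V := fun w hw => by
  rw [← conjSL_conjSL w, Bf_conjSL, hx _ (conjSL_mem hV hw), map_zero]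

lemma IsReflection.apply_conjSL {V : Submodule ℂ (Cn n)} {ρ : Cn n →ₗ[ℂ] Cn n}
    (hρ : IsReflection n V ρ) (hV : conjSub V = V)
    (hVnd : ∀ v ∈ V, (∀ w ∈ V, Bf n v w = 0) → v = 0) (x : Cn n) :
    ρ (conjSL n x) = conjSL n (ρ x) :=
  hρ.apply_map_of_isCompl (isCompl_perp hVnd) _ (fun _ => conjSL_mem hV)
    (fun _ => conjSL_mem_perp hV) x

lemma conjSL_GammaL (u w v : Cn n) (c : ℂ) :
    conjSL n (GammaL n (conjSL n u) (conjSL n w) c (conjSL n v)) =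
      GammaL n u w (starRingEnd ℂ c) v := by
  simp only [GammaL, LinearMap.coe_mk, AddHom.coe_mk, map_add, LinearMap.map_smulₛₗ,
    conjSL_conjSL, Bf_conjSL, map_mul, map_sub, map_one, map_div₀, map_inv₀, Complex.conj_conj]

end Conjugation

theorem statement6_general (n : ℕ) (V : Submodule ℂ (Cn n))
    (hVconj : conjSub V = V)
    (hVnd : ∀ v ∈ V, (∀ w ∈ V, Bf n v w = 0) → v = 0)
    (ρ : Cn n →ₗ[ℂ] Cn n) (hρ : IsReflection n V ρ)
    (α : ℂ)
    (ℓ : Cn n)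
    (hℓcompl : Bf n ℓ (ρ ℓ) ≠ 0) :
    Bf n (conjSL n ℓ) (ρ (conjSL n ℓ)) ≠ 0 ∧
      ∀ lam : ℂ, lam ≠ 0 → lam ≠ cstar α → lam ≠ -cstar α →
        ∀ v : Cn n,
          pSF n ρ ℓ α (cstar lam) v =
            conjSL n (pSF n ρ (conjSL n ℓ) (cstar α) lam (conjSL n v)) := by
  have hρC := hρ.apply_conjSL hVconj hVnd
  refine ⟨?_, fun lam hlam _ _ v => ?_⟩
  · rw [hρC, Bf_conjSL]
    exact (map_ne_zero _).mpr hℓcompl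
  · rw [pSF, pSF, hρC, conjSL_GammaL, psi_cstar α hlam]

/-- Let `V` be the complexification of a `B`-nondegenerate real
subspace (so `V̄ = V`, with reflection `ρ = ρ_V`), `α ∈ ℂ^×`, and `L = ⟨ℓ⟩` a null line
with `L, ρ_V L` complementary.  Then `L̄, ρ_V L̄` are also complementary and, for every
`λ` for which both sides are defined, `p^V_{α,L}(λ*) = C ∘ p^V_{α*,L̄}(λ) ∘ C`. -/
theorem statement6 (n : ℕ) (V : Submodule ℂ (Cn n))
    (hVconj : conjSub V = V)
    (hVnd : ∀ v ∈ V, (∀ w ∈ V, Bf n v w = 0) → v = 0)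
    (ρ : Cn n →ₗ[ℂ] Cn n) (hρ : IsReflection n V ρ)
    (α : ℂ) (hα : α ≠ 0)
    (ℓ : Cn n) (hℓ : ℓ ≠ 0) (hℓnull : Bf n ℓ ℓ = 0)
    (hℓcompl : Bf n ℓ (ρ ℓ) ≠ 0) :
    Bf n (conjSL n ℓ) (ρ (conjSL n ℓ)) ≠ 0 ∧
      ∀ lam : ℂ, lam ≠ 0 → lam ≠ cstar α → lam ≠ -cstar α →
        ∀ v : Cn n,
          pSF n ρ ℓ α (cstar lam) v =
            conjSL n (pSF n ρ (conjSL n ℓ) (cstar α) lam (conjSL n v)) :=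
  statement6_general n V hVconj hVnd ρ hρ α ℓ hℓcompl
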